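/- arXiv:2411.02771 — 5 statements merged into one kernel-verified Lean document; each statement's English description precedes it below -/
import Mathlib

section
/- Let g : ℝ → ℝ be monotone nondecreasing with finite range, and let δ > 0 be the minimum gap between distinct values in the range of g (if the range is a singleton, any δ > 0 works). Let h : ℝ → ℝ satisfy |h(t)| ≤ B for all t in the range of g, with B > 0. Then for every ε with |ε| < δ/(2B), the function g + ε·(h ∘ g) is monotone nondecreasing. -/
theorem stmt5 (g h : ℝ → ℝ) (hg : Monotone g) (hfin : (Set.range g).Finite)
    (δ B : ℝ) (hδ : 0 < δ) (hB : 0 < B)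
    (hgap : ∀ a ∈ Set.range g, ∀ b ∈ Set.range g, a ≠ b → δ ≤ |a - b|)
    (hhB : ∀ t ∈ Set.range g, |h t| ≤ B)
    (ε : ℝ) (hε : |ε| < δ / (2 * B)) :
    Monotone (fun t => g t + ε * h (g t)) := by
  intro s t hst
  simp only
  by_cases heq : g s = g t
  · rw [heq]
  · have hlt : g s < g t := lt_of_le_of_ne (hg hst) heq
    have hgap' : δ ≤ g t - g s := by
      have := hgap (g s) ⟨s, rfl⟩ (g t) ⟨t, rfl⟩ heq
      rw [abs_sub_comm, abs_of_pos (by linarith)] at this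
      linarith
    have h1 : |h (g s)| ≤ B := hhB _ ⟨s, rfl⟩
    have h2 : |h (g t)| ≤ B := hhB _ ⟨t, rfl⟩
    have key : ε * (h (g s) - h (g t)) < δ := by
      calc ε * (h (g s) - h (g t)) ≤ |ε * (h (g s) - h (g t))| := le_abs_self _
        _ = |ε| * |h (g s) - h (g t)| := abs_mul _ _
        _ ≤ |ε| * (2 * B) := by
            apply mul_le_mul_of_nonneg_left _ (abs_nonneg _)
            calc |h (g s) - h (g t)| ≤ |h (g s)| + |h (g t)| := abs_sub _ _
              _ ≤ 2 * B := by linarith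
        _ < δ / (2 * B) * (2 * B) := by
            apply mul_lt_mul_of_pos_right hε; positivity
        _ = δ := by field_simp
    nlinarith
end

section
/- Let x₁,…,xₙ ∈ ℝ and y₁,…,yₙ ∈ ℝ. Suppose ĝ : ℝ → ℝ is monotone nondecreasing with finite range and minimizes g ↦ Σᵢ (yᵢ − g(xᵢ))² over all monotone nondecreasing functions g : ℝ → ℝ. Then for every function h : ℝ → ℝ, Σᵢ h(ĝ(xᵢ))·(yᵢ − ĝ(xᵢ)) = 0. -/
theorem stmt6 (n : ℕ) (x y : Fin n → ℝ) (g₀ : ℝ → ℝ) (hmono : Monotone g₀)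
    (hfin : (Set.range g₀).Finite)
    (hmin : ∀ g : ℝ → ℝ, Monotone g →
      ∑ i, (y i - g₀ (x i)) ^ 2 ≤ ∑ i, (y i - g (x i)) ^ 2) :
    ∀ h : ℝ → ℝ, ∑ i, h (g₀ (x i)) * (y i - g₀ (x i)) = 0 := by
  intro h
  classical
  set Fs := hfin.toFinset with hFs
  have hmem : ∀ t : ℝ, g₀ t ∈ Fs := by
    intro t
    simp [hFs, Set.Finite.mem_toFinset]
  have hne : Fs.Nonempty := ⟨g₀ 0, hmem 0⟩
  set M := Fs.sup' hne (fun v => |h v|) with hM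
  have hMb : ∀ t : ℝ, |h (g₀ t)| ≤ M := by
    intro t
    rw [hM]
    exact Finset.le_sup' (fun v => |h v|) (hmem t)
  have hM0 : 0 ≤ M := le_trans (abs_nonneg _) (hMb 0)
  set P := (Fs ×ˢ Fs).filter (fun p => p.1 < p.2) with hP
  set δ : ℝ := if hPne : P.Nonempty then P.inf' hPne (fun p => p.2 - p.1) else 1 with hδ
  have hδ0 : 0 < δ := by
    by_cases hPne : P.Nonempty
    · rw [hδ, dif_pos hPne]
      refine (Finset.lt_inf'_iff _).mpr fun b hb => ?_
      rw [hP, Finset.mem_filter] at hb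
      linarith [hb.2]
    · rw [hδ, dif_neg hPne]; norm_num
  have hgap : ∀ s t : ℝ, g₀ s < g₀ t → δ ≤ g₀ t - g₀ s := by
    intro s t hst
    have hmemP : (g₀ s, g₀ t) ∈ P := by
      rw [hP, Finset.mem_filter]
      exact ⟨Finset.mem_product.mpr ⟨hmem s, hmem t⟩, hst⟩
    have hPne : P.Nonempty := ⟨(g₀ s, g₀ t), hmemP⟩
    rw [hδ, dif_pos hPne]
    exact Finset.inf'_le _ hmemP
  set ε₀ : ℝ := δ / (2 * M + 1) with hε₀
  have hε₀pos : 0 < ε₀ := by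
    apply div_pos hδ0; linarith
  have hmonoP : ∀ ε : ℝ, |ε| ≤ ε₀ → Monotone (fun t => g₀ t + ε * h (g₀ t)) := by
    intro ε hε s t hst
    rcases eq_or_lt_of_le (hmono hst) with heq | hlt
    · simp [heq]
    · have h1 := hgap s t hlt
      have h2 := hMb s
      have h3 := hMb t
      have h4 : |ε| * (2 * M + 1) ≤ δ := by
        rw [← le_div_iff₀ (by linarith : (0:ℝ) < 2 * M + 1)]
        exact hε
      have h5 : ε * h (g₀ s) - ε * h (g₀ t) ≤ |ε| * (2 * M) := by
        have := abs_sub (h (g₀ s)) (h (g₀ t))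
        calc ε * h (g₀ s) - ε * h (g₀ t) = ε * (h (g₀ s) - h (g₀ t)) := by ring
          _ ≤ |ε * (h (g₀ s) - h (g₀ t))| := le_abs_self _
          _ = |ε| * |h (g₀ s) - h (g₀ t)| := abs_mul _ _
          _ ≤ |ε| * (|h (g₀ s)| + |h (g₀ t)|) := by
              apply mul_le_mul_of_nonneg_left (abs_sub _ _) (abs_nonneg _)
          _ ≤ |ε| * (2 * M) := by
              apply mul_le_mul_of_nonneg_left (by linarith) (abs_nonneg _)
      have habs : 0 ≤ |ε| := abs_nonneg _
      simp only
      nlinarith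
  set T := ∑ i, h (g₀ (x i)) * (y i - g₀ (x i)) with hT
  set Q := ∑ i, (h (g₀ (x i))) ^ 2 with hQ
  have hQ0 : 0 ≤ Q := Finset.sum_nonneg fun i _ => sq_nonneg _
  have key : ∀ ε : ℝ, |ε| ≤ ε₀ → 0 ≤ -2 * ε * T + ε ^ 2 * Q := by
    intro ε hε
    have h1 := hmin (fun t => g₀ t + ε * h (g₀ t)) (hmonoP ε hε)
    have h2 : ∑ i, (y i - (fun t => g₀ t + ε * h (g₀ t)) (x i)) ^ 2
        = ∑ i, (y i - g₀ (x i)) ^ 2 + (-2 * ε * T + ε ^ 2 * Q) := by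
      rw [hT, hQ, Finset.mul_sum, Finset.mul_sum, ← Finset.sum_add_distrib,
        ← Finset.sum_add_distrib]
      apply Finset.sum_congr rfl
      intro i _
      ring
    rw [h2] at h1
    linarith
  by_contra hTne
  set ε : ℝ := min ε₀ (|T| / (Q + 1)) with hε
  have hTpos : 0 < |T| := abs_pos.mpr hTne
  have hεpos : 0 < ε := lt_min hε₀pos (div_pos hTpos (by linarith))
  have hε1 : |ε| ≤ ε₀ := by rw [abs_of_pos hεpos]; exact min_le_left _ _
  have hε2 : |(-ε)| ≤ ε₀ := by rw [abs_neg]; exact hε1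
  have k1 := key ε hε1
  have k2 := key (-ε) hε2
  have hεle : ε ≤ |T| / (Q + 1) := min_le_right _ _
  have hεQ : ε * (Q + 1) ≤ |T| := by
    rw [← le_div_iff₀ (by linarith : (0:ℝ) < Q + 1)]
    exact hεle
  -- from k1, k2 : 2 * ε * |T| ≤ ε^2 * Q
  have habsT : 2 * ε * |T| ≤ ε ^ 2 * Q := by
    rcases abs_cases T with ⟨hc, _⟩ | ⟨hc, _⟩ <;> rw [hc] <;> nlinarith
  nlinarith
end

section
/- Let x₁,…,xₙ ∈ ℝ and y₁,…,yₙ ∈ ℝ, and suppose ĝ : ℝ → ℝ is monotone nondecreasing with finite range and minimizes g ↦ Σᵢ (yᵢ − g(xᵢ))² over monotone nondecreasing g. Then for every c in the set {ĝ(x₁),…,ĝ(xₙ)}, c equals the average of {yᵢ : ĝ(xᵢ) = c}; that is, c · #{i : ĝ(xᵢ) = c} = Σ_{i : ĝ(xᵢ)=c} yᵢ. -/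
/-!
For a Lipschitz function `h` and small `t`, the map `u ↦ u + t * h u` is monotone, so composing it
with the isotonic fit gives a competitor. Hence `t = 0` is a local minimum of the squared loss along
this perturbation, and the vanishing derivative is the score equation `∑ (yᵢ - ĝ xᵢ) h (ĝ xᵢ) = 0`.
Taking for `h` a tent of height `δ` at `c`, narrower than the gap between `c` and the other fitted
values, turns it into `δ * ∑_{ĝ xᵢ = c} (yᵢ - c) = 0`.
-/

open Finset Filter Topology

theorem monotone_add_mul_of_lipschitzWith {K : NNReal} {f : ℝ → ℝ} (hf : LipschitzWith K f)
    {t : ℝ} (ht : |t| * K ≤ 1) : Monotone fun u => u + t * f u := by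
  intro u v huv
  have hdist : |f u - f v| ≤ K * |u - v| := by
    simpa [Real.dist_eq] using hf.dist_le_mul u v
  have : t * (f u - f v) ≤ v - u := calc
    t * (f u - f v) ≤ |t| * |f u - f v| := by rw [← abs_mul]; exact le_abs_self _
    _ ≤ |t| * (K * |u - v|) := by gcongr
    _ = (|t| * K) * (v - u) := by rw [abs_sub_comm, abs_of_nonneg (sub_nonneg.2 huv)]; ring
    _ ≤ v - u := mul_le_of_le_one_left (sub_nonneg.2 huv) ht
  dsimp only
  linarith

theorem sum_sub_mul_eq_zero_of_forall_monotone_le {ι : Type*} [Fintype ι] (v y : ι → ℝ)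
    (hmin : ∀ φ : ℝ → ℝ, Monotone φ → ∑ i, (y i - v i) ^ 2 ≤ ∑ i, (y i - φ (v i)) ^ 2)
    {K : NNReal} {h : ℝ → ℝ} (hh : LipschitzWith K h) :
    ∑ i, (y i - v i) * h (v i) = 0 := by
  set L : ℝ → ℝ := fun t => ∑ i, (y i - (v i + t * h (v i))) ^ 2
  have hL : HasDerivAt L (∑ i, 2 * (y i - v i) * -h (v i)) 0 := by
    have := HasDerivAt.fun_sum (u := univ) (x := (0 : ℝ)) fun i _ =>
      (((hasDerivAt_id (0 : ℝ)).mul_const (h (v i))).const_add (v i) |>.const_sub (y i)).pow 2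
    simpa using this
  have hmin_loc : IsLocalMin L 0 := by
    have hsmall : ∀ᶠ t : ℝ in 𝓝 0, |t| * K < 1 :=
      ((continuous_abs.mul (continuous_const (y := (K : ℝ)))).tendsto' 0 0 (by simp)).eventually
        (gt_mem_nhds one_pos)
    filter_upwards [hsmall] with t ht
    simpa [L] using hmin _ (monotone_add_mul_of_lipschitzWith hh ht.le)
  have hderiv : ∑ i, 2 * (y i - v i) * -h (v i) = -2 * ∑ i, (y i - v i) * h (v i) := by
    rw [mul_sum]
    exact sum_congr rfl fun i _ => by ring
  linarith [hmin_loc.hasDerivAt_eq_zero hL]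

theorem Finset.exists_pos_le_abs_sub_of_ne (s : Finset ℝ) (c : ℝ) :
    ∃ δ > 0, ∀ u ∈ s, u ≠ c → δ ≤ |u - c| := by
  have hc : c ∈ ((s.erase c : Finset ℝ) : Set ℝ)ᶜ := by simp
  obtain ⟨δ, hδ, hball⟩ := Metric.isOpen_iff.1 (s.erase c).finite_toSet.isClosed.isOpen_compl c hc
  refine ⟨δ, hδ, fun u hu huc => not_lt.1 fun hlt => hball ?_ (mem_erase.2 ⟨huc, hu⟩)⟩
  rwa [Metric.mem_ball, Real.dist_eq]

theorem lipschitzWith_one_max_zero_sub_abs_sub (δ c : ℝ) :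
    LipschitzWith 1 fun u => max 0 (δ - |u - c|) := by
  refine LipschitzWith.of_dist_le_mul fun u v => ?_
  simp only [Real.dist_eq, NNReal.coe_one, one_mul]
  calc |max 0 (δ - |u - c|) - max 0 (δ - |v - c|)|
      ≤ |(δ - |u - c|) - (δ - |v - c|)| := by
        rw [max_comm 0, max_comm 0]; exact abs_max_sub_max_le_abs _ _ _
    _ = |(|v - c| - |u - c|)| := by ring_nf
    _ ≤ |(v - c) - (u - c)| := abs_abs_sub_abs_le_abs_sub _ _
    _ = |u - v| := by rw [abs_sub_comm]; ring_nf

open Classical in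
theorem stmt7_general (n : ℕ) (x y : Fin n → ℝ) (g₀ : ℝ → ℝ) (hmono : Monotone g₀)
    (hmin : ∀ g : ℝ → ℝ, Monotone g →
      ∑ i, (y i - g₀ (x i)) ^ 2 ≤ ∑ i, (y i - g (x i)) ^ 2) :
    ∀ c ∈ Finset.image (fun i => g₀ (x i)) Finset.univ,
      c * ((Finset.univ.filter (fun i => g₀ (x i) = c)).card : ℝ)
        = ∑ i ∈ Finset.univ.filter (fun i => g₀ (x i) = c), y i := by
  intro c _
  obtain ⟨δ, hδ, hgap⟩ := (univ.image fun i => g₀ (x i)).exists_pos_le_abs_sub_of_ne c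
  have hscore := sum_sub_mul_eq_zero_of_forall_monotone_le (fun i => g₀ (x i)) y
    (fun φ hφ => hmin (φ ∘ g₀) (hφ.comp hmono)) (lipschitzWith_one_max_zero_sub_abs_sub δ c)
  have hbump : ∀ i, (y i - g₀ (x i)) * max 0 (δ - |g₀ (x i) - c|)
      = if g₀ (x i) = c then (y i - c) * δ else 0 := by
    intro i
    split_ifs with hi
    · simp [hi, hδ.le]
    · simp [hgap _ (mem_image_of_mem _ (mem_univ i)) hi]
  simp only [hbump, ← sum_filter, ← sum_mul, sum_sub_distrib, sum_const, nsmul_eq_mul] at hscore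
  have hsum := (mul_eq_zero.1 hscore).resolve_right hδ.ne'
  linarith

open Classical in
theorem stmt7 (n : ℕ) (x y : Fin n → ℝ) (g₀ : ℝ → ℝ) (hmono : Monotone g₀)
    (hfin : (Set.range g₀).Finite)
    (hmin : ∀ g : ℝ → ℝ, Monotone g →
      ∑ i, (y i - g₀ (x i)) ^ 2 ≤ ∑ i, (y i - g (x i)) ^ 2) :
    ∀ c ∈ Finset.image (fun i => g₀ (x i)) Finset.univ,
      c * ((Finset.univ.filter (fun i => g₀ (x i) = c)).card : ℝ)
        = ∑ i ∈ Finset.univ.filter (fun i => g₀ (x i) = c), y i :=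
  stmt7_general n x y g₀ hmono hmin
end

section
/- Let x₁,…,xₙ ∈ ℝ, and let L : (ℝ → ℝ) → ℝ be a linear functional on functions (i.e., L(a·f + g) = a·L(f) + L(g)). Suppose ĝ : ℝ → ℝ is monotone nondecreasing with finite range and minimizes g ↦ Σᵢ g(xᵢ)² − 2·L(g) over all monotone nondecreasing g : ℝ → ℝ. Then for every function h : ℝ → ℝ, Σᵢ h(ĝ(xᵢ))·ĝ(xᵢ) = L(h ∘ ĝ). -/
theorem stmt8 (n : ℕ) (x : Fin n → ℝ) (L : (ℝ → ℝ) → ℝ)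
    (hL : ∀ (a : ℝ) (f g : ℝ → ℝ), L (fun t => a * f t + g t) = a * L f + L g)
    (g₀ : ℝ → ℝ) (hmono : Monotone g₀) (hfin : (Set.range g₀).Finite)
    (hmin : ∀ g : ℝ → ℝ, Monotone g →
      (∑ i, (g₀ (x i)) ^ 2) - 2 * L g₀ ≤ (∑ i, (g (x i)) ^ 2) - 2 * L g) :
    ∀ h : ℝ → ℝ, ∑ i, h (g₀ (x i)) * g₀ (x i) = L (h ∘ g₀) := by
  intro h
  classical
  set R : Finset ℝ := hfin.toFinset with hR
  set P : Finset (ℝ × ℝ) := (R ×ˢ R).filter (fun p => p.1 < p.2) with hP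
  set f : ℝ × ℝ → ℝ := fun p => (p.2 - p.1) / (1 + |h p.1 - h p.2|) with hf
  obtain ⟨ε₀, hε₀pos, hε₀⟩ : ∃ ε₀ > 0, ∀ p ∈ P, ε₀ ≤ f p := by
    by_cases hne : P.Nonempty
    · refine ⟨P.inf' hne f, ?_, fun p hp => Finset.inf'_le f hp⟩
      apply (Finset.lt_inf'_iff hne).2
      intro p hp
      have hlt : p.1 < p.2 := (Finset.mem_filter.1 hp).2
      have h1 : (0:ℝ) < 1 + |h p.1 - h p.2| := by positivity
      exact div_pos (by linarith) h1
    · exact ⟨1, one_pos, fun p hp => absurd ⟨p, hp⟩ hne⟩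
  have hmonoε : ∀ ε : ℝ, |ε| ≤ ε₀ → Monotone (fun t => g₀ t + ε * h (g₀ t)) := by
    intro ε hε s s' hss
    rcases eq_or_lt_of_le (hmono hss) with heq | hlt
    · simp only [heq, le_refl]
    · have hp : (g₀ s, g₀ s') ∈ P := by
        rw [hP, Finset.mem_filter, Finset.mem_product]
        refine ⟨⟨?_, ?_⟩, hlt⟩
        · rw [hR, Set.Finite.mem_toFinset]; exact ⟨s, rfl⟩
        · rw [hR, Set.Finite.mem_toFinset]; exact ⟨s', rfl⟩
      have hle := hε₀ _ hp
      rw [hf] at hle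
      dsimp at hle
      have h1 : (0:ℝ) < 1 + |h (g₀ s) - h (g₀ s')| := by positivity
      have h2 : ε₀ * (1 + |h (g₀ s) - h (g₀ s')|) ≤ g₀ s' - g₀ s :=
        (le_div_iff₀ h1).1 hle
      have h3 : ε * (h (g₀ s) - h (g₀ s')) ≤ |ε| * |h (g₀ s) - h (g₀ s')| := by
        calc ε * (h (g₀ s) - h (g₀ s')) ≤ |ε * (h (g₀ s) - h (g₀ s'))| := le_abs_self _
          _ = |ε| * |h (g₀ s) - h (g₀ s')| := abs_mul _ _
      have h4 : (0:ℝ) ≤ |h (g₀ s) - h (g₀ s')| := abs_nonneg _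
      have h5 : (0:ℝ) ≤ |ε| := abs_nonneg _
      dsimp only
      nlinarith
  set c : ℝ := (∑ i, h (g₀ (x i)) * g₀ (x i)) - L (h ∘ g₀) with hc
  set A : ℝ := ∑ i, (h (g₀ (x i)))^2 with hA
  have hA0 : 0 ≤ A := Finset.sum_nonneg fun i _ => sq_nonneg _
  have key : ∀ ε : ℝ, |ε| ≤ ε₀ → 0 ≤ 2*ε*c + ε^2*A := by
    intro ε hε
    have hmin' := hmin _ (hmonoε ε hε)
    have hLg : L (fun t => g₀ t + ε * h (g₀ t)) = ε * L (h ∘ g₀) + L g₀ := by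
      have heq : (fun t => g₀ t + ε * h (g₀ t)) = (fun t => ε * (h ∘ g₀) t + g₀ t) := by
        funext t; simp [Function.comp]; ring
      rw [heq, hL]
    have hsum : ∑ i, (g₀ (x i) + ε * h (g₀ (x i)))^2
        = (∑ i, (g₀ (x i))^2) + 2*ε*(∑ i, h (g₀ (x i)) * g₀ (x i)) + ε^2 * A := by
      rw [hA, Finset.mul_sum, Finset.mul_sum, ← Finset.sum_add_distrib,
        ← Finset.sum_add_distrib]
      exact Finset.sum_congr rfl fun i _ => by ring
    rw [hLg] at hmin'
    rw [hsum] at hmin'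
    rw [hc]
    linarith
  have hc0 : c = 0 := by
    by_contra hcne
    have hcpos : 0 < |c| := abs_pos.2 hcne
    set t := min ε₀ (|c| / (A+1)) with ht
    have ht0 : 0 < t := lt_min hε₀pos (div_pos hcpos (by linarith))
    have h1 := key t (by rw [abs_of_pos ht0]; exact min_le_left _ _)
    have h2 := key (-t) (by rw [abs_neg, abs_of_pos ht0]; exact min_le_left _ _)
    have htA : t * (A+1) ≤ |c| := by
      have hmr : t ≤ |c| / (A+1) := min_le_right _ _
      have : t * (A+1) ≤ (|c| / (A+1)) * (A+1) := by
        apply mul_le_mul_of_nonneg_right hmr; linarith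
      rwa [div_mul_cancel₀] at this
      linarith
    have habs : |2*t*c| ≤ t^2*A := by
      rw [abs_le]
      constructor <;> nlinarith
    have h2tc : 2*t*|c| ≤ t^2*A := by
      calc 2*t*|c| = |2*t*c| := by
            rw [abs_mul, abs_mul]
            rw [abs_of_pos ht0, abs_of_pos (by norm_num : (0:ℝ) < 2)]
        _ ≤ t^2*A := habs
    nlinarith
  rw [hc] at hc0
  linarith
end

section
/- Let n ∈ ℕ, let v₁,…,vₙ ∈ ℝ and y₁,…,yₙ ∈ ℝ. Then the following are equivalent: (i) for every function θ : ℝ → ℝ, Σᵢ θ(vᵢ)·(yᵢ − vᵢ) = 0; (ii) for every c ∈ {v₁,…,vₙ}, Σ_{i : vᵢ = c} (yᵢ − c) = 0; (iii) Σᵢ (yᵢ − vᵢ)² = min over all functions θ : ℝ → ℝ of Σᵢ (yᵢ − θ(vᵢ))². -/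
open Classical in
theorem stmt17 (n : ℕ) (v y : Fin n → ℝ) :
    ((∀ θ : ℝ → ℝ, ∑ i, θ (v i) * (y i - v i) = 0) ↔
      (∀ c ∈ Finset.image v Finset.univ,
        ∑ i ∈ Finset.univ.filter (fun i => v i = c), (y i - c) = 0)) ∧
    ((∀ c ∈ Finset.image v Finset.univ,
        ∑ i ∈ Finset.univ.filter (fun i => v i = c), (y i - c) = 0) ↔
      (∀ θ : ℝ → ℝ, ∑ i, (y i - v i) ^ 2 ≤ ∑ i, (y i - θ (v i)) ^ 2)) := by
  have h12 : (∀ θ : ℝ → ℝ, ∑ i, θ (v i) * (y i - v i) = 0) ↔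
      (∀ c ∈ Finset.image v Finset.univ,
        ∑ i ∈ Finset.univ.filter (fun i => v i = c), (y i - c) = 0) := by
    constructor
    · intro h c hc
      have := h (fun x => if x = c then 1 else 0)
      simp only [ite_mul, one_mul, zero_mul] at this
      rw [Finset.sum_ite, Finset.sum_const_zero, add_zero] at this
      rw [← this]
      exact Finset.sum_congr rfl (fun i hi => by
        rw [Finset.mem_filter] at hi; rw [hi.2])
    · intro h θ
      rw [← Finset.sum_fiberwise_of_maps_to (g := v) (t := Finset.image v Finset.univ)
        (fun i _ => Finset.mem_image_of_mem v (Finset.mem_univ i))]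
      refine Finset.sum_eq_zero (fun c hc => ?_)
      have : ∑ i ∈ Finset.univ.filter (fun i => v i = c), θ (v i) * (y i - v i)
          = θ c * ∑ i ∈ Finset.univ.filter (fun i => v i = c), (y i - c) := by
        rw [Finset.mul_sum]
        exact Finset.sum_congr rfl (fun i hi => by
          rw [Finset.mem_filter] at hi; rw [hi.2])
      rw [this, h c hc, mul_zero]
  refine ⟨h12, ?_, ?_⟩
  · intro h θ
    have cross := h12.mpr h (fun x => x - θ x)
    have expand : ∀ i : Fin n, (y i - θ (v i)) ^ 2
        = (y i - v i) ^ 2 + 2 * ((v i - θ (v i)) * (y i - v i)) + (v i - θ (v i)) ^ 2 := by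
      intro i; ring
    rw [Finset.sum_congr rfl (fun i _ => expand i)]
    rw [Finset.sum_add_distrib, Finset.sum_add_distrib, ← Finset.mul_sum, cross, mul_zero,
      add_zero]
    have : (0:ℝ) ≤ ∑ i, (v i - θ (v i)) ^ 2 :=
      Finset.sum_nonneg (fun i _ => sq_nonneg _)
    linarith
  · intro h c hc
    set S := ∑ i ∈ Finset.univ.filter (fun i => v i = c), (y i - c) with hS
    set N := (Finset.univ.filter (fun i => v i = c)).card with hN
    have hNpos : 0 < N := by
      rw [Finset.mem_image] at hc
      obtain ⟨i, _, hi⟩ := hc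
      exact Finset.card_pos.mpr ⟨i, Finset.mem_filter.mpr ⟨Finset.mem_univ i, hi⟩⟩
    have hNR : (0:ℝ) < (N:ℝ) := by exact_mod_cast hNpos
    set t := S / N with ht
    have key := h (fun x => if x = c then x + t else x)
    have expand : ∀ i : Fin n, (y i - (if v i = c then v i + t else v i)) ^ 2
        = (y i - v i) ^ 2 + (if v i = c then -2 * t * (y i - c) + t ^ 2 else 0) := by
      intro i
      by_cases hv : v i = c
      · simp only [hv, if_pos]; ring
      · simp [hv]
    rw [Finset.sum_congr rfl (fun i _ => expand i), Finset.sum_add_distrib,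
      Finset.sum_ite, Finset.sum_const_zero, add_zero] at key
    have hsum : ∑ i ∈ Finset.univ.filter (fun i => v i = c), (-2 * t * (y i - c) + t ^ 2)
        = -2 * t * S + N * t ^ 2 := by
      rw [Finset.sum_add_distrib, ← Finset.mul_sum, ← hS, Finset.sum_const, nsmul_eq_mul, ← hN]
    rw [hsum] at key
    have h0 : (0:ℝ) ≤ -2 * t * S + N * t ^ 2 := by linarith
    have hst : (N:ℝ) * t = S := by rw [ht]; field_simp
    have hrw : -2 * t * S = -2 * (N:ℝ) * t ^ 2 := by rw [← hst]; ring
    rw [hrw] at h0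
    have ht2 : t ^ 2 ≤ 0 := by nlinarith [sq_nonneg t]
    have ht0 : t = 0 := by nlinarith [sq_nonneg t]
    rw [← hst, ht0, mul_zero]
end
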